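/- arXiv:2405.11172 — 3 statements merged into one kernel-verified Lean document; each statement's English description precedes it below -/
import Mathlib

section
/- For every σ > 0, the function φ : ℝ → ℝ defined by φ(x) = (sin(πσx)/(πσx))² for x ≠ 0 and φ(0) = 1 is integrable, and its Fourier transform satisfies 𝓕φ(y) = (1/σ)·(1 − |y|/σ) for all y with |y| ≤ σ, and 𝓕φ(y) = 0 for all y with |y| ≥ σ. -/
open Real MeasureTheory Complex FourierTransform

private lemma integral_linear_mul_cexp (A B c : ℂ) (hc : c ≠ 0) (a b : ℝ) :
    ∫ t in a..b, (A + B * t) * Complex.exp (c * t) =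
      ((A + B * b) / c - B / c ^ 2) * Complex.exp (c * b)
        - ((A + B * a) / c - B / c ^ 2) * Complex.exp (c * a) := by
  have key : ∀ t : ℝ, HasDerivAt (fun s : ℝ => ((A + B * s) / c - B / c ^ 2) * Complex.exp (c * s))
      ((A + B * t) * Complex.exp (c * t)) t := by
    intro t
    have h1 : HasDerivAt (fun s : ℝ => ((A + B * s) / c - B / c ^ 2)) (B / c) t := by
      have : HasDerivAt (fun s : ℝ => (s : ℂ)) 1 t := Complex.ofRealCLM.hasDerivAt
      have := ((this.const_mul B).const_add A).div_const c
      simpa using this.sub_const (B / c ^ 2)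
    have h2 : HasDerivAt (fun s : ℝ => Complex.exp (c * s)) (c * Complex.exp (c * t)) t := by
      have hin : HasDerivAt (fun s : ℝ => c * (s : ℂ)) c t := by
        simpa using (Complex.ofRealCLM.hasDerivAt (x := t)).const_mul c
      simpa [mul_comm] using hin.cexp
    have := h1.fun_mul h2
    refine this.congr_deriv ?_
    field_simp
    ring
  rw [intervalIntegral.integral_eq_sub_of_hasDerivAt (fun t _ => key t)]
  · apply Continuous.intervalIntegrable
    fun_prop

/-- the triangle (Fejér) function -/
noncomputable def tri (σ t : ℝ) : ℝ := σ⁻¹ * max (1 - |t| / σ) 0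

private lemma tri_eq_zero {σ t : ℝ} (hσ : 0 < σ) (ht : σ ≤ |t|) : tri σ t = 0 := by
  have : 1 - |t| / σ ≤ 0 := by
    rw [sub_nonpos, le_div_iff₀ hσ]; simpa using ht
  simp [tri, max_eq_right this]

private lemma tri_eq {σ t : ℝ} (hσ : 0 < σ) (ht : |t| ≤ σ) :
    tri σ t = σ⁻¹ * (1 - |t| / σ) := by
  have : 0 ≤ 1 - |t| / σ := by
    rw [sub_nonneg, div_le_one hσ]; exact ht
  simp [tri, max_eq_left this]

private lemma tri_continuous (σ : ℝ) : Continuous (tri σ) := by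
  unfold tri; fun_prop

private lemma abs_ge_of_not_mem_Icc {σ v : ℝ} (hσ : 0 < σ) (hv : v ∉ Set.Icc (-σ) σ) :
    σ ≤ |v| := by
  rw [Set.mem_Icc] at hv
  rw [le_abs]
  rcases lt_or_ge v 0 with h | h
  · right; by_contra h'; push_neg at h'; exact hv ⟨by linarith, by linarith⟩
  · left; by_contra h'; push_neg at h'; exact hv ⟨by linarith, by linarith⟩

private lemma tri_integrable {σ : ℝ} (hσ : 0 < σ) : Integrable (tri σ) := by
  apply (tri_continuous σ).integrable_of_hasCompactSupport
  apply HasCompactSupport.intro (isCompact_Icc (a := -σ) (b := σ))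
  intro x hx
  exact tri_eq_zero hσ (abs_ge_of_not_mem_Icc hσ hx)

private lemma tri_fourier {σ : ℝ} (hσ : 0 < σ) (x : ℝ) (hx : x ≠ 0) :
    𝓕 (fun t : ℝ => ((tri σ t : ℝ) : ℂ)) x
      = (((Real.sin (π * σ * x) / (π * σ * x)) ^ 2 : ℝ) : ℂ) := by
  have hσ' : σ ≠ 0 := hσ.ne'
  have hσc : (σ : ℂ) ≠ 0 := by exact_mod_cast hσ'
  obtain ⟨c, hc_def⟩ : ∃ c : ℂ, c = ((-2 * π * x : ℝ) : ℂ) * Complex.I := ⟨_, rfl⟩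
  have hc : c ≠ 0 := by
    rw [hc_def]
    apply mul_ne_zero _ Complex.I_ne_zero
    simp [Complex.ofReal_ne_zero, Real.pi_ne_zero, hx]
  rw [Real.fourier_real_eq_integral_exp_smul]
  have hsupp : ∀ v : ℝ, v ∉ Set.Icc (-σ) σ →
      Complex.exp ((-2 * π * v * x : ℝ) * Complex.I) • ((tri σ v : ℝ) : ℂ) = 0 := by
    intro v hv
    simp [tri_eq_zero hσ (abs_ge_of_not_mem_Icc hσ hv)]
  rw [← setIntegral_eq_integral_of_forall_compl_eq_zero hsupp,
    integral_Icc_eq_integral_Ioc, ← intervalIntegral.integral_of_le (by linarith : -σ ≤ σ)]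
  have hcont : Continuous fun v : ℝ =>
      Complex.exp ((-2 * π * v * x : ℝ) * Complex.I) • ((tri σ v : ℝ) : ℂ) := by
    have := tri_continuous σ
    fun_prop
  rw [← intervalIntegral.integral_add_adjacent_intervals (a := -σ) (b := 0) (c := σ)
    (hcont.intervalIntegrable _ _) (hcont.intervalIntegrable _ _)]
  have hneg : ∫ t in (-σ : ℝ)..0,
        Complex.exp ((-2 * π * t * x : ℝ) * Complex.I) • ((tri σ t : ℝ) : ℂ)
      = ∫ t in (-σ : ℝ)..0,
        (((σ⁻¹ : ℝ) : ℂ) + ((σ⁻¹ * σ⁻¹ : ℝ) : ℂ) * t) * Complex.exp (c * t) := by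
    apply intervalIntegral.integral_congr
    intro t ht
    rw [Set.uIcc_of_le (by linarith : (-σ:ℝ) ≤ 0), Set.mem_Icc] at ht
    have habs : |t| = -t := abs_of_nonpos ht.2
    simp only [smul_eq_mul]
    rw [tri_eq hσ (by rw [habs]; linarith)]
    have harg : ((-2 * π * t * x : ℝ) : ℂ) * Complex.I = c * t := by
      rw [hc_def]; push_cast; ring
    rw [harg, habs]
    push_cast
    ring
  have hpos : ∫ t in (0 : ℝ)..σ,
        Complex.exp ((-2 * π * t * x : ℝ) * Complex.I) • ((tri σ t : ℝ) : ℂ)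
      = ∫ t in (0 : ℝ)..σ,
        (((σ⁻¹ : ℝ) : ℂ) + (-((σ⁻¹ * σ⁻¹ : ℝ) : ℂ)) * t) * Complex.exp (c * t) := by
    apply intervalIntegral.integral_congr
    intro t ht
    rw [Set.uIcc_of_le (by linarith : (0:ℝ) ≤ σ), Set.mem_Icc] at ht
    have habs : |t| = t := abs_of_nonneg ht.1
    simp only [smul_eq_mul]
    rw [tri_eq hσ (by rw [habs]; linarith)]
    have harg : ((-2 * π * t * x : ℝ) : ℂ) * Complex.I = c * t := by
      rw [hc_def]; push_cast; ring
    rw [harg, habs]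
    push_cast
    ring
  rw [hneg, hpos, integral_linear_mul_cexp _ _ _ hc, integral_linear_mul_cexp _ _ _ hc]
  simp only [Complex.ofReal_zero, Complex.ofReal_neg, Complex.ofReal_mul, Complex.ofReal_inv,
    mul_zero, add_zero, Complex.exp_zero, mul_one, Complex.ofReal_one]
  have hsum : Complex.exp (c * (σ : ℂ)) + Complex.exp (c * -(σ : ℂ))
      = ((2 * Real.cos (2 * π * x * σ) : ℝ) : ℂ) := by
    have h1 : c * ((σ : ℝ) : ℂ) = ((-(2 * π * x * σ) : ℝ) : ℂ) * Complex.I := by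
      rw [hc_def]; push_cast; ring
    have h2 : c * -((σ : ℝ) : ℂ) = (((2 * π * x * σ) : ℝ) : ℂ) * Complex.I := by
      rw [hc_def]; push_cast; ring
    rw [h1, h2, Complex.exp_mul_I, Complex.exp_mul_I, Complex.ofReal_neg, Complex.cos_neg,
      Complex.sin_neg]
    push_cast [Complex.ofReal_cos]
    ring
  have hc2 : c ^ 2 = ((-((2 * π * x) ^ 2) : ℝ) : ℂ) := by
    rw [hc_def, mul_pow, Complex.I_sq]
    push_cast; ring
  have h1 : ((σ:ℂ))⁻¹ + ((σ:ℂ))⁻¹ * ((σ:ℂ))⁻¹ * -(σ:ℂ) = 0 := by field_simp; ring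
  have h2 : ((σ:ℂ))⁻¹ + -(((σ:ℂ))⁻¹ * ((σ:ℂ))⁻¹) * (σ:ℂ) = 0 := by field_simp; ring
  rw [h1, h2]
  trans ((σ:ℂ))⁻¹ * ((σ:ℂ))⁻¹ / c ^ 2 * (Complex.exp (c * (σ:ℂ)) + Complex.exp (c * -(σ:ℂ)) - 2)
  · ring
  rw [hsum, hc2]
  rw [show ((σ:ℂ))⁻¹ * ((σ:ℂ))⁻¹ / ((-((2 * π * x) ^ 2) : ℝ) : ℂ)
        * (((2 * Real.cos (2 * π * x * σ) : ℝ) : ℂ) - 2)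
      = (((σ⁻¹ * σ⁻¹ * (2 * Real.cos (2 * π * x * σ) - 2) / (-((2 * π * x) ^ 2))) : ℝ) : ℂ) by
    push_cast; ring]
  norm_cast
  have h3 : 2 * π * x * σ = 2 * (π * σ * x) := by ring
  rw [h3, Real.cos_two_mul]
  have hπ := Real.pi_ne_zero
  have hpy := Real.sin_sq_add_cos_sq (π * σ * x)
  field_simp
  nlinarith [hpy, Real.sin_sq_add_cos_sq (σ * π * x)]

private lemma tri_integral {σ : ℝ} (hσ : 0 < σ) : ∫ t : ℝ, tri σ t = 1 := by
  have hσ' : σ ≠ 0 := hσ.ne'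
  have hsupp : ∀ v : ℝ, v ∉ Set.Icc (-σ) σ → tri σ v = 0 := fun v hv =>
    tri_eq_zero hσ (abs_ge_of_not_mem_Icc hσ hv)
  rw [← setIntegral_eq_integral_of_forall_compl_eq_zero hsupp,
    integral_Icc_eq_integral_Ioc, ← intervalIntegral.integral_of_le (by linarith : -σ ≤ σ)]
  have hcont := tri_continuous σ
  rw [← intervalIntegral.integral_add_adjacent_intervals (a := -σ) (b := 0) (c := σ)
    (hcont.intervalIntegrable _ _) (hcont.intervalIntegrable _ _)]
  have hlin : ∀ A B a b : ℝ, ∫ t in a..b, (A + B * t) = A * (b - a) + B * (b^2 - a^2) / 2 := by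
    intro A B a b
    have hI : IntervalIntegrable (fun t : ℝ => B * t) volume a b :=
      ((continuous_const.mul continuous_id') : Continuous fun t : ℝ => B * t).intervalIntegrable _ _
    rw [intervalIntegral.integral_add intervalIntegrable_const hI,
      intervalIntegral.integral_const, intervalIntegral.integral_const_mul, integral_id,
      smul_eq_mul]
    ring
  have hneg : ∫ t in (-σ : ℝ)..0, tri σ t = ∫ t in (-σ : ℝ)..0, (σ⁻¹ + σ⁻¹ * σ⁻¹ * t) := by
    apply intervalIntegral.integral_congr
    intro t ht
    rw [Set.uIcc_of_le (by linarith : (-σ:ℝ) ≤ 0), Set.mem_Icc] at ht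
    have habs : |t| = -t := abs_of_nonpos ht.2
    rw [tri_eq hσ (by rw [habs]; linarith), habs]
    field_simp
    try ring
  have hpos : ∫ t in (0 : ℝ)..σ, tri σ t = ∫ t in (0 : ℝ)..σ, (σ⁻¹ + -(σ⁻¹ * σ⁻¹) * t) := by
    apply intervalIntegral.integral_congr
    intro t ht
    rw [Set.uIcc_of_le (by linarith : (0:ℝ) ≤ σ), Set.mem_Icc] at ht
    have habs : |t| = t := abs_of_nonneg ht.1
    rw [tri_eq hσ (by rw [habs]; linarith), habs]
    field_simp
    try ring
  rw [hneg, hpos, hlin, hlin]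
  field_simp
  ring

private lemma tri_fourier_zero {σ : ℝ} (hσ : 0 < σ) :
    𝓕 (fun t : ℝ => ((tri σ t : ℝ) : ℂ)) 0 = 1 := by
  rw [Real.fourier_real_eq_integral_exp_smul]
  simp only [mul_zero, Complex.ofReal_zero, zero_mul, Complex.exp_zero, one_smul]
  rw [← Complex.ofReal_one, ← tri_integral hσ]
  exact integral_ofReal

/-- For every σ > 0, the Fejér-type function
`φ(x) = (sin(πσx)/(πσx))²` (with `φ(0) = 1`) is integrable, and its Fourier
transform equals `(1/σ)(1 − |y|/σ)` for `|y| ≤ σ` and `0` for `|y| ≥ σ`. -/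
theorem naive_test_function_fourier (σ : ℝ) (hσ : 0 < σ) (φ : ℝ → ℝ)
    (hφ : ∀ x : ℝ, x ≠ 0 → φ x = (Real.sin (π * σ * x) / (π * σ * x)) ^ 2)
    (hφ0 : φ 0 = 1) :
    Integrable φ ∧
    (∀ y : ℝ, |y| ≤ σ →
      FourierTransform.fourier (fun x : ℝ => (φ x : ℂ)) y
        = (((1 / σ) * (1 - |y| / σ) : ℝ) : ℂ)) ∧
    (∀ y : ℝ, σ ≤ |y| →
      FourierTransform.fourier (fun x : ℝ => (φ x : ℂ)) y = 0) := by
  have hσ' : σ ≠ 0 := hσ.ne'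
  have hπσ : π * σ ≠ 0 := mul_ne_zero Real.pi_ne_zero hσ'
  set ψ : ℝ → ℝ := fun x => (Real.sin (π * σ * x) / (π * σ * x)) ^ 2 with hψdef
  have hae : ∀ᵐ x : ℝ, x ≠ 0 := by
    rw [MeasureTheory.ae_iff]
    convert Real.volume_singleton (a := 0) using 2
    ext x; simp
  have hφψ : ψ =ᵐ[volume] φ := by
    filter_upwards [hae] with x hx
    rw [hφ x hx]
  have hψmeas : AEStronglyMeasurable ψ volume := by
    apply Measurable.aestronglyMeasurable
    have hm : Measurable fun x : ℝ => π * σ * x := measurable_id.const_mul _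
    exact ((Real.measurable_sin.comp hm).div hm).pow_const 2
  have hψnonneg : ∀ x, 0 ≤ ψ x := fun x => sq_nonneg _
  have hψle1 : ∀ x, ψ x ≤ 1 := by
    intro x
    rcases eq_or_ne x 0 with rfl | hx
    · simp [hψdef]
    · show (Real.sin (π * σ * x) / (π * σ * x)) ^ 2 ≤ 1
      have := Real.sin_sq_le_sq (x := π * σ * x)
      rw [div_pow, div_le_one (by positivity)]
      exact this
  have hψle_inv : ∀ x : ℝ, x ≠ 0 → ψ x ≤ (π * σ)⁻¹ ^ 2 * (x ^ 2)⁻¹ := by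
    intro x hx
    show (Real.sin (π * σ * x) / (π * σ * x)) ^ 2 ≤ (π * σ)⁻¹ ^ 2 * (x ^ 2)⁻¹
    have h1 : (Real.sin (π * σ * x) / (π * σ * x)) ^ 2
        = Real.sin (π * σ * x) ^ 2 / ((π * σ) ^ 2 * x ^ 2) := by
      rw [div_pow]; ring_nf
    rw [h1]
    rw [div_le_iff₀ (by positivity)]
    calc Real.sin (π * σ * x) ^ 2 ≤ 1 := Real.sin_sq_le_one _
      _ = (π * σ)⁻¹ ^ 2 * (x ^ 2)⁻¹ * ((π * σ) ^ 2 * x ^ 2) := by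
          field_simp
  have hIoi : IntegrableOn ψ (Set.Ioi (1:ℝ)) := by
    apply Integrable.mono'
      ((integrableOn_Ioi_rpow_of_lt (by norm_num : (-2:ℝ) < -1) one_pos).const_mul
        ((π * σ)⁻¹ ^ 2))
    · exact hψmeas.restrict
    · filter_upwards [ae_restrict_mem measurableSet_Ioi] with x hx
      have hx0 : (0:ℝ) < x := lt_trans one_pos hx
      rw [Real.norm_eq_abs, _root_.abs_of_nonneg (hψnonneg x)]
      have hxp : x ^ (-2 : ℝ) = (x ^ 2)⁻¹ := by
        rw [Real.rpow_neg hx0.le]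
        norm_cast
      rw [hxp]
      exact hψle_inv x hx0.ne'
  have hIci : IntegrableOn ψ (Set.Ici (1:ℝ)) := Iff.mpr integrableOn_Ici_iff_integrableOn_Ioi hIoi
  have hψeven : ∀ x : ℝ, ψ (-x) = ψ x := by
    intro x
    show (Real.sin (π * σ * (-x)) / (π * σ * (-x))) ^ 2
      = (Real.sin (π * σ * x) / (π * σ * x)) ^ 2
    simp only [mul_neg, Real.sin_neg, neg_div_neg_eq]
  have hIic : IntegrableOn ψ (Set.Iic (-1:ℝ)) := by
    have m : MeasurableEmbedding (fun x : ℝ => -x) :=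
      (Homeomorph.neg ℝ).measurableEmbedding
    rw [show (volume : Measure ℝ) = Measure.map (fun x => -x) volume from
      (Measure.map_neg_eq_self (volume : Measure ℝ)).symm, m.integrableOn_map_iff]
    have hpre : (fun x : ℝ => -x) ⁻¹' (Set.Iic (-1)) = Set.Ici 1 := by
      ext x; simp [le_neg]
    have hcomp : (ψ ∘ fun x : ℝ => -x) = ψ := by
      ext x; exact hψeven x
    rw [hpre, hcomp]
    exact hIci
  have hIcc : IntegrableOn ψ (Set.Icc (-1:ℝ) 1) := by
    apply Measure.integrableOn_of_bounded (M := 1)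
    · exact (measure_Icc_lt_top).ne
    · exact hψmeas
    · filter_upwards with x
      rw [Real.norm_eq_abs, _root_.abs_of_nonneg (hψnonneg x)]
      exact hψle1 x
  have hψint : Integrable ψ := by
    have hunion : Set.Iic (-1:ℝ) ∪ (Set.Icc (-1) 1 ∪ Set.Ioi 1) = Set.univ := by
      ext x
      simp only [Set.mem_union, Set.mem_Iic, Set.mem_Icc, Set.mem_Ioi, Set.mem_univ, iff_true]
      rcases le_or_gt x (-1) with h | h
      · exact Or.inl h
      · rcases le_or_gt x 1 with h' | h'
        · exact Or.inr (Or.inl ⟨h.le, h'⟩)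
        · exact Or.inr (Or.inr h')
    rw [← integrableOn_univ, ← hunion]
    exact hIic.union (hIcc.union hIoi)
  have hφint : Integrable φ := hψint.congr hφψ
  -- Fourier transform part
  have hFtri : 𝓕 (fun t : ℝ => ((tri σ t : ℝ) : ℂ)) = fun x : ℝ => ((φ x : ℝ) : ℂ) := by
    funext x
    rcases eq_or_ne x 0 with rfl | hx
    · rw [tri_fourier_zero hσ, hφ0]; norm_num
    · rw [tri_fourier hσ x hx, hφ x hx]
  have htriC_int : Integrable (fun t : ℝ => ((tri σ t : ℝ) : ℂ)) := (tri_integrable hσ).ofReal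
  have htriC_cont : Continuous (fun t : ℝ => ((tri σ t : ℝ) : ℂ)) :=
    Complex.continuous_ofReal.comp (tri_continuous σ)
  have hFint : Integrable (𝓕 (fun t : ℝ => ((tri σ t : ℝ) : ℂ))) := by
    rw [hFtri]; exact hφint.ofReal
  have hinv := htriC_cont.fourierInv_fourier_eq htriC_int hFint
  have hval : ∀ y : ℝ, 𝓕 (fun x : ℝ => (φ x : ℂ)) y = ((tri σ y : ℝ) : ℂ) := by
    intro y
    have e1 : 𝓕 (fun x : ℝ => (φ x : ℂ)) y
        = 𝓕 (𝓕 (fun t : ℝ => ((tri σ t : ℝ) : ℂ))) y := by rw [hFtri]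
    have e2 : 𝓕 (𝓕 (fun t : ℝ => ((tri σ t : ℝ) : ℂ))) y
        = 𝓕⁻ (𝓕 (fun t : ℝ => ((tri σ t : ℝ) : ℂ))) (-y) := by
      rw [Real.fourierInv_eq_fourier_neg]; norm_num
    rw [e1, e2, hinv]
    show ((tri σ (-y) : ℝ) : ℂ) = ((tri σ y : ℝ) : ℂ)
    have : tri σ (-y) = tri σ y := by unfold tri; rw [abs_neg]
    rw [this]
  refine ⟨hφint, fun y hy => ?_, fun y hy => ?_⟩
  · rw [hval y, tri_eq hσ hy, inv_eq_one_div]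
  · rw [hval y, tri_eq_zero hσ hy]
    norm_num
end

section
/- Fix σ > 0. Let h : ℝ → ℝ be an even, twice continuously differentiable function supported in [−1, 1], define f(y) = h(2y/σ), g = f∗f, and for ω > 0 let φ_ω be the Fourier transform of the function y ↦ g(y) + (2πω)^{−2} g″(y). Then φ_ω(x) is real for every x, φ_ω(x) ≥ 0 whenever |x| ≤ ω, and φ_ω(x) ≤ 0 whenever |x| ≥ ω. -/
open Real MeasureTheory

/-- The convolution `(a∗b)(x) = ∫_ℝ a(t) b(x−t) dt`. -/
noncomputable def conv (a b : ℝ → ℝ) (x : ℝ) : ℝ := ∫ t : ℝ, a t * b (x - t)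

/-- With `f(y) = h(2y/σ)`, `g = f∗f`, and
`φ_ω = 𝓕(y ↦ g(y) + (2πω)⁻² g″(y))`, the function `φ_ω` is real valued,
nonnegative on `|x| ≤ ω`, and nonpositive on `|x| ≥ ω`. -/
theorem sign_of_constructed_test_function (σ : ℝ) (hσ : 0 < σ) (h : ℝ → ℝ)
    (heven : ∀ x, h (-x) = h x) (hC2 : ContDiff ℝ 2 h)
    (hsupp : Function.support h ⊆ Set.Icc (-1) 1)
    (f : ℝ → ℝ) (hf : ∀ y, f y = h (2 * y / σ)) (g : ℝ → ℝ) (hg : g = conv f f)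
    (ω : ℝ) (hω : 0 < ω) (φω : ℝ → ℂ)
    (hφω : ∀ x : ℝ, φω x =
      FourierTransform.fourier
        (fun y : ℝ => ((g y + ((2 * π * ω) ^ 2)⁻¹ * deriv (deriv g) y : ℝ) : ℂ)) x) :
    (∀ x : ℝ, (φω x).im = 0) ∧
    (∀ x : ℝ, |x| ≤ ω → 0 ≤ (φω x).re) ∧
    (∀ x : ℝ, ω ≤ |x| → (φω x).re ≤ 0) := by
  -- basic facts about f
  have hfC2 : ContDiff ℝ 2 f := by
    have : f = h ∘ (fun y : ℝ => 2 * y / σ) := funext hf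
    rw [this]
    exact hC2.comp ((contDiff_const.mul contDiff_id).div_const σ)
  have hfcont : Continuous f := hfC2.continuous
  have hfsupp : HasCompactSupport f := by
    apply HasCompactSupport.intro (isCompact_Icc (a := -(σ/2)) (b := σ/2))
    intro y hy
    rw [hf]
    by_contra hne
    have hmem := hsupp hne
    simp only [Set.mem_Icc] at hmem
    apply hy
    have h1 : (-1 : ℝ) * σ ≤ 2 * y := (le_div_iff₀ hσ).mp hmem.1
    have h2 : 2 * y ≤ σ := (div_le_one hσ).mp hmem.2
    constructor <;> linarith
  have hfeven : ∀ y, f (-y) = f y := by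
    intro y
    rw [hf, hf, show 2 * (-y) / σ = -(2 * y / σ) by ring, heven]
  -- g as a Mathlib convolution
  have hgconv : g = MeasureTheory.convolution f f (ContinuousLinearMap.mul ℝ ℝ) volume := by
    rw [hg]; funext x; rfl
  have hgC2 : ContDiff ℝ 2 g := by
    rw [hgconv]
    exact_mod_cast HasCompactSupport.contDiff_convolution_right (n := 2) (ContinuousLinearMap.mul ℝ ℝ) hfsupp hfcont.locallyIntegrable (by exact_mod_cast hfC2)
  have hgsupp : HasCompactSupport g := by
    rw [hgconv]; exact HasCompactSupport.convolution (L := ContinuousLinearMap.mul ℝ ℝ) hfsupp hfsupp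
  -- first and second derivatives of g
  have hgdiff : Differentiable ℝ g := hgC2.differentiable (by norm_num)
  have hg1 : ContDiff ℝ 1 (deriv g) := by
    have : ContDiff ℝ (1 + 1) g := by exact_mod_cast hgC2
    exact (contDiff_succ_iff_deriv.mp this).2.2
  have hg1diff : Differentiable ℝ (deriv g) := hg1.differentiable (by norm_num)
  have hg2cont : Continuous (deriv (deriv g)) := by
    have : ContDiff ℝ (0 + 1) (deriv g) := by exact_mod_cast hg1
    exact ((contDiff_succ_iff_deriv.mp this).2.2).continuous
  have hg1supp : HasCompactSupport (deriv g) := hgsupp.deriv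
  have hg2supp : HasCompactSupport (deriv (deriv g)) := hg1supp.deriv
  -- complexifications
  set G : ℝ → ℂ := fun y => (g y : ℂ) with hG
  have hderG : deriv G = fun y => ((deriv g y : ℝ) : ℂ) := by
    funext y; exact ((hgdiff y).hasDerivAt.ofReal_comp).deriv
  have hderG2 : deriv (deriv G) = fun y => ((deriv (deriv g) y : ℝ) : ℂ) := by
    rw [hderG]; funext y; exact ((hg1diff y).hasDerivAt.ofReal_comp).deriv
  have hGdiff : Differentiable ℝ G := fun y => ((hgdiff y).hasDerivAt.ofReal_comp).differentiableAt
  have hG1diff : Differentiable ℝ (deriv G) := by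
    rw [hderG]; exact fun y => ((hg1diff y).hasDerivAt.ofReal_comp).differentiableAt
  have hGint : Integrable G := (hgC2.continuous.integrable_of_hasCompactSupport hgsupp).ofReal
  have hG1int : Integrable (deriv G) := by
    rw [hderG]; exact (hg1.continuous.integrable_of_hasCompactSupport hg1supp).ofReal
  have hG2int : Integrable (deriv (deriv G)) := by
    rw [hderG2]; exact (hg2cont.integrable_of_hasCompactSupport hg2supp).ofReal
  -- Fourier transform of the second derivative
  have hFder2 : ∀ x : ℝ, FourierTransform.fourier (fun y => ((deriv (deriv g) y : ℝ) : ℂ)) x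
      = (2 * π * Complex.I * x) ^ 2 • FourierTransform.fourier G x := by
    intro x
    have e1 := Real.fourier_deriv hGint hGdiff hG1int
    have e2 := Real.fourier_deriv hG1int hG1diff hG2int
    rw [← hderG2]
    rw [congrFun e2 x, congrFun e1 x]
    simp [smul_smul]; ring
  -- main pointwise identity
  have key : ∀ x : ℝ, ∃ r : ℝ, φω x = (((1 - x^2/ω^2) * r^2 : ℝ) : ℂ) := by
    intro x
    set E : ℝ → ℂ := fun v => Complex.exp (↑(-2 * π * v * x) * Complex.I) with hEdef
    have hEcont : Continuous E := by
      apply Complex.continuous_exp.comp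
      fun_prop
    have hEnorm : ∀ v, ‖E v‖ = 1 := fun v => Complex.norm_exp_ofReal_mul_I _
    have hEmul : ∀ (F : ℝ → ℂ), Integrable F → Integrable (fun v => E v * F v) := by
      intro F hF
      exact hF.bdd_mul hEcont.aestronglyMeasurable (c := 1) (Filter.Eventually.of_forall fun v => le_of_eq (hEnorm v))
    have hEadd : ∀ a b : ℝ, E a * E b = E (a + b) := by
      intro a b
      rw [hEdef, ← Complex.exp_add]
      congr 1
      push_cast
      ring
    have hFeq : ∀ (F : ℝ → ℂ), FourierTransform.fourier F x = ∫ v : ℝ, E v * F v := by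
      intro F
      rw [Real.fourier_real_eq_integral_exp_smul]
      simp_rw [smul_eq_mul]
      rfl
    have hD2int : Integrable (fun y : ℝ => ((deriv (deriv g) y : ℝ) : ℂ)) := hderG2 ▸ hG2int
    set c : ℝ := ((2 * π * ω) ^ 2)⁻¹ with hc
    -- linearity
    have hsplit : φω x = (∫ v : ℝ, E v * G v)
        + (c : ℂ) * (∫ v : ℝ, E v * ((deriv (deriv g) v : ℝ) : ℂ)) := by
      rw [hφω x, hFeq]
      have : (fun v : ℝ => E v * ((g v + c * deriv (deriv g) v : ℝ) : ℂ))
          = fun v : ℝ => E v * G v + (c : ℂ) * (E v * ((deriv (deriv g) v : ℝ) : ℂ)) := by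
        funext v; push_cast; ring
      rw [this, integral_add (hEmul G hGint) ((hEmul _ hD2int).const_mul _), integral_const_mul]
    -- Fourier of second derivative
    have hD2F : (∫ v : ℝ, E v * ((deriv (deriv g) v : ℝ) : ℂ))
        = (2 * π * Complex.I * x) ^ 2 * (∫ v : ℝ, E v * G v) := by
      rw [← hFeq, ← hFeq, hFder2 x, smul_eq_mul]
    -- the coefficient
    have hcoef : (1 : ℂ) + (c : ℂ) * (2 * π * Complex.I * x) ^ 2
        = (((1 - x^2/ω^2) : ℝ) : ℂ) := by
      have hI : (2 * ↑π * Complex.I * ↑x) ^ 2 = -((((2 * π * x) ^ 2 : ℝ)) : ℂ) := by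
        push_cast
        ring_nf
        rw [Complex.I_sq]
        ring
      have hπ : (π : ℝ) ≠ 0 := Real.pi_ne_zero
      have hω' : (ω : ℝ) ≠ 0 := hω.ne'
      have hrc : (1 : ℝ) + c * (-((2 * π * x) ^ 2)) = 1 - x^2/ω^2 := by
        rw [hc]
        field_simp
        ring
      rw [hI, ← hrc]
      push_cast
      ring
    -- convolution identity: Fourier of g is the square of Fourier of f
    set z : ℂ := ∫ v : ℝ, E v * ((f v : ℝ) : ℂ) with hz
    have hfvol : Integrable f := hfcont.integrable_of_hasCompactSupport hfsupp
    have hconv : (∫ v : ℝ, E v * G v) = z ^ 2 := by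
      set φ' : ℝ → ℝ → ℂ := fun y t =>
        (E t * ((f t : ℝ) : ℂ)) * (E (y - t) * ((f (y - t) : ℝ) : ℂ)) with hφ'
      have hKcont : Continuous (Function.uncurry φ') := by
        apply Continuous.mul
        · exact ((hEcont.comp continuous_snd).mul
            (Complex.continuous_ofReal.comp (hfcont.comp continuous_snd)))
        · exact ((hEcont.comp (continuous_fst.sub continuous_snd)).mul
            (Complex.continuous_ofReal.comp (hfcont.comp (continuous_fst.sub continuous_snd))))
      have hKsupp : HasCompactSupport (Function.uncurry φ') := by
        apply HasCompactSupport.intro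
          ((hfsupp.isCompact.add hfsupp.isCompact).prod hfsupp.isCompact)
        intro p hp
        have : f p.2 = 0 ∨ f (p.1 - p.2) = 0 := by
          by_contra hcon
          push_neg at hcon
          apply hp
          constructor
          · have h1 : p.1 - p.2 ∈ tsupport f := subset_tsupport f hcon.2
            have h2 : p.2 ∈ tsupport f := subset_tsupport f hcon.1
            have := Set.add_mem_add h1 h2
            simpa using this
          · exact subset_tsupport f hcon.1
        rcases this with h0 | h0 <;> simp [Function.uncurry, hφ', h0]
      have hKint : Integrable (Function.uncurry φ') (volume.prod volume) :=
        hKcont.integrable_of_hasCompactSupport hKsupp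
      have step1 : (∫ v : ℝ, E v * G v) = ∫ y : ℝ, ∫ t : ℝ, φ' y t := by
        congr 1
        funext y
        have hGy : G y = ((∫ t : ℝ, f t * f (y - t) : ℝ) : ℂ) := by
          rw [hG]; rw [hg]; rfl
        rw [hGy]
        have : (∫ t : ℝ, φ' y t) = ∫ t : ℝ, E y * ((f t * f (y - t) : ℝ) : ℂ) := by
          congr 1
          funext t
          have hsplitE : E y = E t * E (y - t) := by
            rw [hEadd]; congr 1; ring
          rw [hφ', hsplitE]
          push_cast
          ring
        rw [this, integral_const_mul]
        congr 1
        exact (integral_ofReal (𝕜 := ℂ) (f := fun t : ℝ => f t * f (y - t))).symm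
      have step2 : (∫ y : ℝ, ∫ t : ℝ, φ' y t) = ∫ t : ℝ, ∫ y : ℝ, φ' y t :=
        integral_integral_swap hKint
      have step3 : ∀ t : ℝ, (∫ y : ℝ, φ' y t) = (E t * ((f t : ℝ) : ℂ)) * z := by
        intro t
        rw [hφ']
        rw [integral_const_mul]
        congr 1
        exact integral_sub_right_eq_self (fun y => E y * ((f y : ℝ) : ℂ)) t
      rw [step1, step2]
      simp_rw [step3]
      rw [integral_mul_const, hz]
      ring
    -- realness of z
    have hzreal : ∃ r : ℝ, z = (r : ℂ) := by
      have hconjz : (starRingEnd ℂ) z = z := by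
        rw [hz, ← integral_conj]
        have : (fun v : ℝ => (starRingEnd ℂ) (E v * ((f v : ℝ) : ℂ)))
            = fun v : ℝ => E (-v) * ((f v : ℝ) : ℂ) := by
          funext v
          rw [map_mul, Complex.conj_ofReal]
          congr 1
          simp only [hEdef, ← Complex.exp_conj, map_mul, Complex.conj_ofReal, Complex.conj_I]
          congr 1
          push_cast
          ring
        rw [this]
        have h1 : (∫ v : ℝ, E (-v) * ((f v : ℝ) : ℂ))
            = ∫ v : ℝ, E v * ((f (-v) : ℝ) : ℂ) := by
          rw [← integral_neg_eq_self (fun v : ℝ => E v * ((f (-v) : ℝ) : ℂ))]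
          simp
        rw [h1]
        simp_rw [hfeven]
      exact ⟨z.re, (Complex.conj_eq_iff_re.mp hconjz).symm⟩
    obtain ⟨r, hr⟩ := hzreal
    refine ⟨r, ?_⟩
    rw [hsplit, hD2F]
    have hfact : (∫ v : ℝ, E v * G v) + (c : ℂ) *
        ((2 * π * Complex.I * x) ^ 2 * ∫ v : ℝ, E v * G v)
        = ((1 : ℂ) + (c : ℂ) * (2 * π * Complex.I * x) ^ 2) * (∫ v : ℝ, E v * G v) := by
      ring
    rw [hfact, hcoef, hconv, hr]
    push_cast
    ring
  refine ⟨?_, ?_, ?_⟩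
  · intro x
    obtain ⟨r, hr⟩ := key x
    rw [hr]; exact Complex.ofReal_im _
  · intro x hx
    obtain ⟨r, hr⟩ := key x
    rw [hr, Complex.ofReal_re]
    apply mul_nonneg _ (sq_nonneg r)
    have hx2 : x^2 ≤ ω^2 := by nlinarith [sq_abs x, abs_nonneg x]
    have : x^2/ω^2 ≤ 1 := (div_le_one (by positivity)).2 hx2
    linarith
  · intro x hx
    obtain ⟨r, hr⟩ := key x
    rw [hr, Complex.ofReal_re]
    apply mul_nonpos_of_nonpos_of_nonneg _ (sq_nonneg r)
    have hx2 : ω^2 ≤ x^2 := by nlinarith [sq_abs x, abs_nonneg x]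
    have : (1:ℝ) ≤ x^2/ω^2 := (one_le_div (by positivity)).2 hx2
    linarith
end

section
/- Fix σ > 0. Let h : ℝ → ℝ be an even, twice continuously differentiable function supported in [−1, 1], and define f(y) = h(2y/σ) and g = f∗f. Set N = σ ∫_0^1 h(u)² du + (σ²/4) ∫_{−1}^{1} ∫_0^{2/σ} h(u) h(v − u) dv du and D = (1/σ) ∫_0^1 h(u) h″(u) du + (1/4) ∫_{−1}^{1} ∫_0^{2/σ} h(u) h″(v − u) dv du, and assume N > 0 and D < 0. Then for every ω > 0, the inequality −(g(0) + (2πω)^{−2} g″(0)) < ∫_0^1 (g(y) + (2πω)^{−2} g″(y)) dy holds if and only if ω > π^{−1} · (N/(−D))^{−1/2}, i.e., if and only if ω > π^{−1} √(−D/N). -/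
open Real MeasureTheory
open scoped Convolution

private lemma bound_aux {σ x : ℝ} (hσ : 0 < σ) (h1 : -1 ≤ 2*x/σ) (h2 : 2*x/σ ≤ 1) :
    -(σ/2) ≤ x ∧ x ≤ σ/2 := by
  constructor <;> nlinarith [div_mul_cancel₀ (2*x) (ne_of_gt hσ),
    mul_le_mul_of_nonneg_right h1 hσ.le, mul_le_mul_of_nonneg_right h2 hσ.le]

private lemma even_interval {F : ℝ → ℝ} (hF : Continuous F) (hFe : ∀ x, F (-x) = F x) :
    ∫ u in (-1:ℝ)..1, F u = 2 * ∫ u in (0:ℝ)..1, F u := by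
  have h1 : ∫ u in (-1:ℝ)..0, F u = ∫ u in (0:ℝ)..1, F u := by
    calc ∫ u in (-1:ℝ)..0, F u = ∫ x in (0:ℝ)..1, F (-x) := by
          rw [intervalIntegral.integral_comp_neg]; norm_num
      _ = ∫ x in (0:ℝ)..1, F x := by simp_rw [hFe]
  rw [← intervalIntegral.integral_add_adjacent_intervals
    (hF.intervalIntegrable (-1) 0) (hF.intervalIntegrable 0 1), h1]
  ring

private lemma integral_support_Icc {G : ℝ → ℝ}
    (hs : ∀ x, x ∉ Set.Icc (-1:ℝ) 1 → G x = 0) :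
    ∫ u : ℝ, G u = ∫ u in (-1:ℝ)..1, G u := by
  rw [← setIntegral_eq_integral_of_forall_compl_eq_zero hs,
    MeasureTheory.integral_Icc_eq_integral_Ioc,
    ← intervalIntegral.integral_of_le (by norm_num : (-1:ℝ) ≤ 1)]

private lemma conv_zero {σ : ℝ} (hσ : 0 < σ) (h H : ℝ → ℝ)
    (hh : Continuous h) (hH : Continuous H)
    (hsh : Function.support h ⊆ Set.Icc (-1) 1)
    (hheven : ∀ x, h (-x) = h x) (hHeven : ∀ x, H (-x) = H x) :
    conv (fun y => h (2*y/σ)) (fun y => H (2*y/σ)) 0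
      = σ * ∫ u in (0:ℝ)..1, h u * H u := by
  have e1 : conv (fun y => h (2*y/σ)) (fun y => H (2*y/σ)) 0
      = ∫ t : ℝ, (fun u => h u * H u) ((2/σ)*t) := by
    unfold conv
    congr 1
    funext t
    simp only
    have e2 : (2*(0-t)/σ) = -(2/σ*t) := by ring
    have e3 : (2*t/σ) = 2/σ*t := by ring
    rw [e2, hHeven, e3]
  rw [e1, MeasureTheory.Measure.integral_comp_mul_left (fun u => h u * H u) (2/σ)]
  have habs : |(2/σ)⁻¹| = σ/2 := by
    rw [inv_div, abs_of_pos (by positivity)]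
  rw [habs, smul_eq_mul,
    integral_support_Icc (fun x hx => by
      have : h x = 0 := by
        by_contra hne; exact hx (hsh (Function.mem_support.mpr hne))
      simp [this]),
    even_interval (F := fun u => h u * H u) (hh.mul hH) (fun x => by rw [hheven, hHeven])]
  ring

private lemma integral_conv {σ : ℝ} (hσ : 0 < σ) (h H : ℝ → ℝ)
    (hh : Continuous h) (hH : Continuous H)
    (hsh : Function.support h ⊆ Set.Icc (-1) 1)
    (hsH : Function.support H ⊆ Set.Icc (-1) 1) :
    ∫ y in (0:ℝ)..1, conv (fun y => h (2*y/σ)) (fun y => H (2*y/σ)) y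
      = σ^2/4 * ∫ u in (-1:ℝ)..1, ∫ v in (0:ℝ)..(2 / σ), h u * H (v - u) := by
  have hFcont : Continuous (fun p : ℝ × ℝ => h (2*p.2/σ) * H (2*(p.1-p.2)/σ)) := by
    apply Continuous.mul
    · exact hh.comp (by continuity)
    · exact hH.comp (by continuity)
  have hFsupp : HasCompactSupport (fun p : ℝ × ℝ => h (2*p.2/σ) * H (2*(p.1-p.2)/σ)) := by
    apply HasCompactSupport.intro (isCompact_Icc.prod isCompact_Icc
      (s := Set.Icc (-(σ/2) + -(σ/2)) (σ/2 + σ/2)) (t := Set.Icc (-(σ/2)) (σ/2)))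
    intro p hp
    by_contra hne
    apply hp
    have h1 : h (2*p.2/σ) ≠ 0 := fun e => hne (by simp [e])
    have h2 : H (2*(p.1-p.2)/σ) ≠ 0 := fun e => hne (by simp [e])
    have b1 := hsh (Function.mem_support.mpr h1)
    have b2 := hsH (Function.mem_support.mpr h2)
    simp only [Set.mem_Icc] at b1 b2
    have c1 := bound_aux hσ b1.1 b1.2
    have c2 := bound_aux hσ b2.1 b2.2
    refine Set.mem_prod.mpr ⟨Set.mem_Icc.mpr ⟨?_, ?_⟩, Set.mem_Icc.mpr ⟨c1.1, c1.2⟩⟩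
    · linarith [c1.1, c2.1]
    · linarith [c1.2, c2.2]
  have hint : Integrable (fun p : ℝ × ℝ => h (2*p.2/σ) * H (2*(p.1-p.2)/σ))
      ((volume.restrict (Set.Ioc (0:ℝ) 1)).prod volume) := by
    have h1 : Integrable (fun p : ℝ × ℝ => h (2*p.2/σ) * H (2*(p.1-p.2)/σ))
        ((volume : Measure ℝ).prod volume) := by
      rw [← Measure.volume_eq_prod]
      exact hFcont.integrable_of_hasCompactSupport hFsupp
    have h2 := h1.restrict (s := Set.Ioc (0:ℝ) 1 ×ˢ Set.univ)
    rwa [← Measure.prod_restrict, Measure.restrict_univ] at h2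
  have swap := MeasureTheory.integral_integral_swap
    (μ := volume.restrict (Set.Ioc (0:ℝ) 1)) (ν := volume)
    (f := fun y t => h (2*t/σ) * H (2*(y-t)/σ)) hint
  have lhs_eq : ∫ y in (0:ℝ)..1, conv (fun y => h (2*y/σ)) (fun y => H (2*y/σ)) y
      = ∫ y in Set.Ioc (0:ℝ) 1, ∫ t : ℝ, h (2*t/σ) * H (2*(y-t)/σ) := by
    rw [intervalIntegral.integral_of_le (by norm_num : (0:ℝ) ≤ 1)]
    rfl
  rw [lhs_eq, swap]
  have inner_eq : ∀ t : ℝ, (∫ y in Set.Ioc (0:ℝ) 1, h (2*t/σ) * H (2*(y-t)/σ))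
      = h (2*t/σ) * ((σ/2) * ∫ v in (0:ℝ)..(2/σ), H (v - 2*t/σ)) := by
    intro t
    rw [MeasureTheory.integral_const_mul]
    congr 1
    rw [← intervalIntegral.integral_of_le (by norm_num : (0:ℝ) ≤ 1)]
    have e : ∀ y : ℝ, H (2*(y-t)/σ) = (fun w => H (w - 2*t/σ)) ((2/σ) * y) := by
      intro y; simp only; congr 1; ring
    simp_rw [e]
    rw [intervalIntegral.integral_comp_mul_left (fun w => H (w - 2*t/σ))
      (by positivity : (2:ℝ)/σ ≠ 0)]
    rw [inv_div, smul_eq_mul, mul_zero, mul_one]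
  simp_rw [inner_eq]
  have e2 : ∀ t : ℝ, h (2*t/σ) * ((σ/2) * ∫ v in (0:ℝ)..(2/σ), H (v - 2*t/σ))
      = (fun u => h u * ((σ/2) * ∫ v in (0:ℝ)..(2/σ), H (v - u))) ((2/σ)*t) := by
    intro t
    have e3 : 2*t/σ = 2/σ*t := by ring
    simp only [e3]
  simp_rw [e2]
  rw [MeasureTheory.Measure.integral_comp_mul_left
    (fun u => h u * ((σ/2) * ∫ v in (0:ℝ)..(2/σ), H (v - u))) (2/σ)]
  have habs : |((2:ℝ)/σ)⁻¹| = σ/2 := by rw [inv_div, abs_of_pos (by positivity)]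
  rw [habs, smul_eq_mul,
    integral_support_Icc (fun x hx => by
      have : h x = 0 := by
        by_contra hne; exact hx (hsh (Function.mem_support.mpr hne))
      simp [this])]
  have e4 : ∀ u : ℝ, h u * ((σ/2) * ∫ v in (0:ℝ)..(2/σ), H (v - u))
      = (σ/2) * (h u * ∫ v in (0:ℝ)..(2/σ), H (v - u)) := fun u => by ring
  simp_rw [e4]
  rw [intervalIntegral.integral_const_mul]
  have e5 : ∀ u : ℝ, (∫ v in (0:ℝ)..(2/σ), h u * H (v - u))
      = h u * ∫ v in (0:ℝ)..(2/σ), H (v - u) := fun u => intervalIntegral.integral_const_mul _ _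
  simp_rw [e5]
  ring

set_option maxHeartbeats 2000000 in
/-- With `f(y) = h(2y/σ)`, `g = f∗f`, and
`N = σ∫_0^1 h² + (σ²/4)∫∫ h(u)h(v−u)`, `D = (1/σ)∫_0^1 h h″ + (1/4)∫∫ h(u)h″(v−u)`,
assuming `N > 0` and `D < 0`, for every `ω > 0` the inequality
`−(g(0) + (2πω)⁻² g″(0)) < ∫_0^1 (g(y) + (2πω)⁻² g″(y)) dy` holds iff
`ω > π⁻¹ √(−D/N)`. -/
theorem explicit_omega_bound (σ : ℝ) (hσ : 0 < σ) (h : ℝ → ℝ)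
    (heven : ∀ x, h (-x) = h x) (hC2 : ContDiff ℝ 2 h)
    (hsupp : Function.support h ⊆ Set.Icc (-1) 1)
    (f : ℝ → ℝ) (hf : ∀ y, f y = h (2 * y / σ)) (g : ℝ → ℝ) (hg : g = conv f f)
    (N D : ℝ)
    (hN : N = σ * (∫ u in (0:ℝ)..1, h u ^ 2)
      + σ ^ 2 / 4 * ∫ u in (-1:ℝ)..1, ∫ v in (0:ℝ)..(2 / σ), h u * h (v - u))
    (hD : D = (1 / σ) * (∫ u in (0:ℝ)..1, h u * deriv (deriv h) u)
      + (1 / 4) * ∫ u in (-1:ℝ)..1, ∫ v in (0:ℝ)..(2 / σ), h u * deriv (deriv h) (v - u))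
    (hNpos : 0 < N) (hDneg : D < 0) :
    ∀ ω : ℝ, 0 < ω →
      ((-(g 0 + ((2 * π * ω) ^ 2)⁻¹ * deriv (deriv g) 0)
          < ∫ y in (0:ℝ)..1, (g y + ((2 * π * ω) ^ 2)⁻¹ * deriv (deriv g) y))
        ↔ ω > π⁻¹ * Real.sqrt (-D / N)) := by
  intro ω hω
  have hπ := Real.pi_pos
  have hfe : f = fun y => h (2 * y / σ) := funext hf
  -- facts about h
  have hhcont : Continuous h := hC2.continuous
  have hdiffh : Differentiable ℝ h := hC2.differentiable (by norm_num)
  have hsplit : Differentiable ℝ (deriv h) ∧ ContDiff ℝ 1 (deriv h)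
      ∧ Continuous (deriv (deriv h)) := by
    have h2 : ContDiff ℝ (1+1) h := by norm_num at hC2 ⊢; exact hC2
    obtain ⟨-, -, h1⟩ := contDiff_succ_iff_deriv.mp h2
    have h1' : ContDiff ℝ (0+1) (deriv h) := by norm_num at h1 ⊢; exact h1
    obtain ⟨hd, -, h0⟩ := contDiff_succ_iff_deriv.mp h1'
    exact ⟨hd, by norm_num at h1' ⊢; exact h1', h0.continuous⟩
  obtain ⟨hdh_diff, hdhC1, hddh_cont⟩ := hsplit
  have hddh_even : ∀ x, deriv (deriv h) (-x) = deriv (deriv h) x := by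
    have hodd : ∀ x, deriv h (-x) = - deriv h x := by
      intro x
      have e : (fun x => h (-x)) = h := funext heven
      have d := deriv_comp_neg (f := h) (x := x)
      rw [e] at d
      linarith [d]
    intro x
    have e : (fun x => deriv h (-x)) = fun x => - deriv h x := funext hodd
    have d1 := deriv_comp_neg (f := deriv h) (x := x)
    rw [e] at d1
    have d2 : deriv (fun x => - deriv h x) x = - deriv (deriv h) x := deriv.neg
    rw [d2] at d1
    linarith
  have hts : tsupport h ⊆ Set.Icc (-1:ℝ) 1 := closure_minimal hsupp isClosed_Icc
  have hs1 : Function.support (deriv h) ⊆ Set.Icc (-1:ℝ) 1 := support_deriv_subset.trans hts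
  have hts1 : tsupport (deriv h) ⊆ Set.Icc (-1:ℝ) 1 := closure_minimal hs1 isClosed_Icc
  have hsdd : Function.support (deriv (deriv h)) ⊆ Set.Icc (-1:ℝ) 1 :=
    support_deriv_subset.trans hts1
  -- facts about f
  have hℓC : ContDiff ℝ 2 (fun y : ℝ => 2 * y / σ) := (contDiff_const.mul contDiff_id).div_const σ
  have hfC2 : ContDiff ℝ 2 f := by rw [hfe]; exact hC2.comp hℓC
  have hfcont : Continuous f := hfC2.continuous
  have hfC1 : ContDiff ℝ 1 f := hfC2.of_le (by norm_num)
  have hfCS : HasCompactSupport f := by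
    apply HasCompactSupport.intro (isCompact_Icc (a := -(σ/2)) (b := σ/2))
    intro x hx
    rw [hfe]
    by_contra hne
    have b := hsupp (Function.mem_support.mpr hne)
    simp only [Set.mem_Icc] at b
    exact hx (Set.mem_Icc.mpr (bound_aux hσ b.1 b.2))
  have hfloc : LocallyIntegrable f volume := hfcont.locallyIntegrable
  have hℓd : ∀ y : ℝ, HasDerivAt (fun y : ℝ => 2*y/σ) (2/σ) y := fun y => by
    simpa using ((hasDerivAt_id y).const_mul 2).div_const σ
  have hfd : ∀ y, HasDerivAt f (2/σ * deriv h (2*y/σ)) y := by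
    rw [hfe]
    intro y
    have := (hdiffh (2*y/σ)).hasDerivAt.comp y (hℓd y)
    simpa [mul_comm, Function.comp_def] using this
  have hdf : deriv f = fun y => 2/σ * deriv h (2*y/σ) := funext fun y => (hfd y).deriv
  have hdfd : ∀ y, HasDerivAt (deriv f) (4/σ^2 * deriv (deriv h) (2*y/σ)) y := by
    intro y
    rw [hdf]
    have hcm := ((hdh_diff (2*y/σ)).hasDerivAt.comp y (hℓd y)).const_mul (2/σ)
    refine hcm.congr_deriv ?_
    ring
  have hddf : deriv (deriv f) = fun y => 4/σ^2 * deriv (deriv h) (2*y/σ) :=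
    funext fun y => (hdfd y).deriv
  have hdfC1 : ContDiff ℝ 1 (deriv f) := by
    rw [hdf]
    exact contDiff_const.mul (hdhC1.comp (hℓC.of_le (by norm_num)))
  have hdfCS : HasCompactSupport (deriv f) := hfCS.deriv
  set L := ContinuousLinearMap.mul ℝ ℝ with hL
  have hconv_ff : conv f f = f ⋆[L, volume] f := by funext x; simp [conv, convolution_def, hL]
  have hconv_fdf : conv f (deriv f) = f ⋆[L, volume] (deriv f) := by
    funext x; simp [conv, convolution_def, hL]
  have hconv_fddf : conv f (deriv (deriv f)) = f ⋆[L, volume] (deriv (deriv f)) := by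
    funext x; simp [conv, convolution_def, hL]
  have hdg : deriv g = conv f (deriv f) := by
    funext x
    rw [hg, hconv_ff, hconv_fdf]
    exact (HasCompactSupport.hasDerivAt_convolution_right L hfloc hfCS hfC1 x).deriv
  have hddg : deriv (deriv g) = conv f (deriv (deriv f)) := by
    funext x
    rw [hdg, hconv_fdf, hconv_fddf]
    exact (HasCompactSupport.hasDerivAt_convolution_right L hfloc hdfCS hdfC1 x).deriv
  have hgval : g = conv (fun y => h (2 * y / σ)) (fun y => h (2 * y / σ)) := by rw [hg, hfe]
  have hddgval : deriv (deriv g) = fun x =>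
      4/σ^2 * conv (fun y => h (2 * y / σ)) (fun y => deriv (deriv h) (2 * y / σ)) x := by
    rw [hddg, hddf, hfe]
    funext x
    unfold conv
    rw [← MeasureTheory.integral_const_mul]
    congr 1; funext t; ring
  -- the two sum identities
  have hId1 : g 0 + ∫ y in (0:ℝ)..1, g y = N := by
    rw [hgval, conv_zero hσ h h hhcont hhcont hsupp heven heven,
      integral_conv hσ h h hhcont hhcont hsupp hsupp, hN]
    simp_rw [pow_two]
  have hId2 : deriv (deriv g) 0 + ∫ y in (0:ℝ)..1, deriv (deriv g) y = 4 * D := by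
    rw [hddgval]
    simp only
    rw [intervalIntegral.integral_const_mul,
      conv_zero hσ h (deriv (deriv h)) hhcont hddh_cont hsupp heven hddh_even,
      integral_conv hσ h (deriv (deriv h)) hhcont hddh_cont hsupp hsdd, hD]
    field_simp
  -- continuity, splitting the integral
  have hcontg : Continuous g := by
    rw [hg, hconv_ff]
    exact HasCompactSupport.continuous_convolution_right L hfCS hfloc hfcont
  have hcontddf : Continuous (deriv (deriv f)) := by
    rw [hddf]
    exact continuous_const.mul (hddh_cont.comp ((continuous_const.mul continuous_id).div_const σ))
  have hcontddg : Continuous (deriv (deriv g)) := by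
    rw [hddg, hconv_fddf]
    exact HasCompactSupport.continuous_convolution_right L hdfCS.deriv hfloc hcontddf
  have hsplitI : ∫ y in (0:ℝ)..1, (g y + ((2*π*ω)^2)⁻¹ * deriv (deriv g) y)
      = (∫ y in (0:ℝ)..1, g y) + ((2*π*ω)^2)⁻¹ * ∫ y in (0:ℝ)..1, deriv (deriv g) y := by
    rw [intervalIntegral.integral_add (g := fun y => ((2*π*ω)^2)⁻¹ * deriv (deriv g) y) (hcontg.intervalIntegrable 0 1)
      ((continuous_const.mul hcontddg).intervalIntegrable 0 1),
      intervalIntegral.integral_const_mul]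
  rw [hsplitI]
  -- final arithmetic
  have hP : (0:ℝ) < (2*π*ω)^2 := by positivity
  set c := ((2*π*ω)^2)⁻¹ with hcdef
  set I1 := ∫ y in (0:ℝ)..1, g y with hI1def
  set I2 := ∫ y in (0:ℝ)..1, deriv (deriv g) y with hI2def
  have hI1' : I1 = N - g 0 := by linarith
  have hI2' : c * I2 = c * (4*D) - c * deriv (deriv g) 0 := by
    rw [show I2 = 4*D - deriv (deriv g) 0 from by linarith]; ring
  have key : (-(g 0 + c * deriv (deriv g) 0) < I1 + c * I2) ↔ c * (4 * -D) < N := by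
    rw [hI1']
    constructor <;> intro hx <;> nlinarith [hI2']
  have hiff2 : c * (4 * -D) < N ↔ -D/N < (π*ω)^2 := by
    rw [hcdef, inv_mul_lt_iff₀ hP, div_lt_iff₀ hNpos]
    constructor <;> intro hx <;> nlinarith [hx]
  have hiff3 : (-D/N < (π*ω)^2) ↔ π⁻¹ * Real.sqrt (-D/N) < ω := by
    rw [inv_mul_lt_iff₀ hπ]
    exact (Real.sqrt_lt' (by positivity : 0 < π * ω)).symm
  rw [gt_iff_lt]
  exact key.trans (hiff2.trans hiff3)
end
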